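/- Let H be a Hopf algebra with invertible antipode, M an anti-Yetter-Drinfeld contramodule with contraaction μ. Then the map τ : Hom^l(V,M) → Hom^r(V,M), τ(φ)(v) = μ(h ↦ φ(hv)), is a morphism of left H-modules: x·τ(φ) = τ(x·φ) for all x ∈ H. -/

import Mathlib

/-!
STATEMENT 7: Let `H` be a Hopf algebra with invertible antipode and `M` an
anti-Yetter-Drinfeld contramodule with contraaction `μ`. Then
`τ : Hom^l(V,M) → Hom^r(V,M)`, `τ(φ)(v) = μ(h ↦ φ(h • v))`, is a morphism of left
`H`-modules: `x • τ(φ) = τ(x • φ)` for all `x ∈ H`.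
-/

open TensorProduct

section

variable {k H V M : Type*} [Field k] [Ring H] [HopfAlgebra k H]
  [AddCommGroup M] [Module k M] [Module H M] [IsScalarTower k H M] [SMulCommClass k H M]
  [AddCommGroup V] [Module k V] [Module H V] [IsScalarTower k H V] [SMulCommClass k H V]

/-- The `k`-linear map `m ↦ x • m` for `x : H`. -/
def hSmul {M : Type*} [AddCommGroup M] [Module k M] [Module H M] [SMulCommClass k H M]
    (x : H) : M →ₗ[k] M where
  toFun m := x • m
  map_add' m m' := smul_add x m m'
  map_smul' c m := (smul_comm c x m).symm

@[simp] lemma hSmul_apply {M : Type*} [AddCommGroup M] [Module k M] [Module H M]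
    [SMulCommClass k H M] (x : H) (m : M) : (hSmul x : M →ₗ[k] M) m = x • m := rfl

/-- The left internal-hom action `(h·φ)(v) = h⁽¹⁾ • φ(S h⁽²⁾ • v)` on `Hom_k(V,M)`. -/
noncomputable def leftHomAct (S : H →ₗ[k] H) (h : H) (φ : V →ₗ[k] M) : V →ₗ[k] M :=
  TensorProduct.lift
    (LinearMap.mk₂ k
      (fun (a b : H) => a • (φ ∘ₗ (hSmul (S b) : V →ₗ[k] V)))
      (fun a a' b => add_smul a a' _)
      (fun c a b => by ext m; simp [smul_assoc])
      (fun a b b' => by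
        ext m
        simp only [LinearMap.smul_apply, LinearMap.coe_comp, Function.comp_apply,
          hSmul_apply, LinearMap.add_apply, map_add, add_smul, smul_add])
      (fun c a b => by
        ext m
        simp only [LinearMap.smul_apply, LinearMap.coe_comp, Function.comp_apply,
          hSmul_apply, map_smul, smul_assoc]
        exact smul_comm a c _))
    (Coalgebra.comul h)

/-- The right internal-hom action `(h·φ)(v) = h⁽²⁾ • φ(S⁻¹ h⁽¹⁾ • v)` on `Hom_k(V,M)`. -/
noncomputable def rightHomAct (Sinv : H →ₗ[k] H) (h : H) (φ : V →ₗ[k] M) : V →ₗ[k] M :=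
  TensorProduct.lift
    (LinearMap.mk₂ k
      (fun (a b : H) => b • (φ ∘ₗ (hSmul (Sinv a) : V →ₗ[k] V)))
      (fun a a' b => by
        ext m
        simp only [LinearMap.smul_apply, LinearMap.coe_comp, Function.comp_apply,
          hSmul_apply, LinearMap.add_apply, map_add, add_smul, smul_add])
      (fun c a b => by
        ext m
        simp only [LinearMap.smul_apply, LinearMap.coe_comp, Function.comp_apply,
          hSmul_apply, map_smul, smul_assoc]
        exact smul_comm b c _)
      (fun a b b' => by ext m; simp [add_smul])
      (fun c a b => by ext m; simp [smul_assoc]))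
    (Coalgebra.comul h)

/-- The `k`-linear map `h ↦ h • v`. -/
def smulPoint (v : V) : H →ₗ[k] V where
  toFun h := h • v
  map_add' a b := add_smul a b v
  map_smul' c a := smul_assoc c a v

@[simp] lemma smulPoint_apply (v : V) (h : H) : (smulPoint (k := k) v) h = h • v := rfl

lemma smulPoint_add (v v' : V) :
    (smulPoint (v + v') : H →ₗ[k] V) = smulPoint v + smulPoint v' := by
  ext h; simp [smul_add]

lemma smulPoint_smul (c : k) (v : V) :
    (smulPoint (c • v) : H →ₗ[k] V) = c • smulPoint v := by
  ext h
  simp only [smulPoint_apply, LinearMap.smul_apply]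
  exact smul_comm h c v

/-- `τ(φ)(v) = μ(h ↦ φ(h • v))`. -/
def tauMap (μ : (H →ₗ[k] M) →ₗ[k] M) (φ : V →ₗ[k] M) : V →ₗ[k] M where
  toFun v := μ (φ ∘ₗ smulPoint v)
  map_add' v v' := by rw [smulPoint_add, LinearMap.comp_add, map_add]
  map_smul' c v := by rw [smulPoint_smul, LinearMap.comp_smul, map_smul]; rfl

end

/-!
Write `ψ = φ(- • v)`. Then `(x·τφ)(v) = x⁽²⁾ • μ(ψ(- · S⁻¹x⁽¹⁾))`, and the aYD condition for
`x⁽²⁾` turns this into `μ(x⁽³⁾ • ψ(S(x⁽⁴⁾) · - · x⁽²⁾S⁻¹(x⁽¹⁾)))`. Since `S⁻¹` is an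
anti-homomorphism, `x⁽²⁾S⁻¹(x⁽¹⁾) ⊗ x⁽³⁾ = S⁻¹(x⁽¹⁾S(x⁽²⁾)) ⊗ x⁽³⁾ = 1 ⊗ x`, which leaves
`μ(x⁽¹⁾ • ψ(S(x⁽²⁾) · -)) = τ(x·φ)(v)`.
-/

universe u v

open Coalgebra HopfAlgebra

namespace Coalgebra.Repr

variable {R A : Type*} [CommSemiring R] [AddCommMonoid A] [Module R A] [CoalgebraStruct R A]

noncomputable def ulift.{w} {ι : Type*} {a : A} (𝓡 : Repr R a ι) :
    Repr R a (ULift.{w} (Fin 𝓡.index.card)) where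
  index := Finset.univ
  left i := 𝓡.left (𝓡.index.equivFin.symm i.down)
  right i := 𝓡.right (𝓡.index.equivFin.symm i.down)
  eq := by
    rw [← 𝓡.eq, ← Finset.sum_coe_sort 𝓡.index]
    exact Fintype.sum_equiv (Equiv.ulift.trans 𝓡.index.equivFin.symm) _ _ fun _ => rfl

end Coalgebra.Repr

section AntipodeInverse

variable {k H : Type*} [CommSemiring k] [Semiring H] [HopfAlgebra k H] {Sinv : H →ₗ[k] H}

lemma antipodeInv_mul (hleft : ∀ x, Sinv (antipode k x) = x)
    (hright : ∀ x, antipode k (Sinv x) = x) (a b : H) :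
    Sinv (a * b) = Sinv b * Sinv a := by
  conv_lhs => rw [← hright a, ← hright b, ← antipode_mul_antidistrib, hleft]

lemma sum_right_mul_antipodeInv_eq_algebraMap_counit (hleft : ∀ x, Sinv (antipode k x) = x)
    (hright : ∀ x, antipode k (Sinv x) = x) {a : H} {ι : Type*} (r : Repr k a ι) :
    ∑ i ∈ r.index, r.right i * Sinv (r.left i) = algebraMap k H (counit a) := by
  have h : ∀ i, r.right i * Sinv (r.left i) = Sinv (r.left i * antipode k (r.right i)) :=
    fun i => by rw [antipodeInv_mul hleft hright, hleft]
  have hone : Sinv 1 = 1 := by simpa using hleft 1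
  rw [Finset.sum_congr rfl fun i _ => h i, ← map_sum, sum_mul_antipode_eq_algebraMap_counit,
    Algebra.algebraMap_eq_smul_one, map_smul, hone]

lemma sum_rTensor_mulRight_antipodeInv_comul_eq_one_tmul (hleft : ∀ x, Sinv (antipode k x) = x)
    (hright : ∀ x, antipode k (Sinv x) = x) {x : H} {ι : Type*} (r : Repr k x ι) :
    ∑ i ∈ r.index, (LinearMap.mulRight k (Sinv (r.left i))).rTensor H (comul (r.right i)) =
      1 ⊗ₜ[k] x := by
  let P : H ⊗[k] (H ⊗[k] H) →ₗ[k] H ⊗[k] H :=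
    lift (LinearMap.rTensorHom H ∘ₗ (LinearMap.mul k H).flip ∘ₗ Sinv)
  have hP : ∀ a t, P (a ⊗ₜ t) = (LinearMap.mulRight k (Sinv a)).rTensor H t := fun a t => rfl
  let r₁ := fun i => ℛ k (r.left i)
  calc _ = P (∑ i ∈ r.index, r.left i ⊗ₜ comul (r.right i)) := by simp only [map_sum, hP]
    _ = P (TensorProduct.assoc k H H H ((comul (R := k)).rTensor H (comul x))) := by
      rw [coassoc_apply, ← r.eq]
      simp only [map_sum, LinearMap.lTensor_tmul]
    _ = ∑ i ∈ r.index,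
          (∑ p ∈ (r₁ i).index, (r₁ i).right p * Sinv ((r₁ i).left p)) ⊗ₜ r.right i := by
      rw [← r.eq]
      simp [← (r₁ _).eq, map_sum, sum_tmul, hP]
    _ = 1 ⊗ₜ[k] x := by
      simp_rw [sum_right_mul_antipodeInv_eq_algebraMap_counit hleft hright,
        Algebra.algebraMap_eq_smul_one, smul_tmul, ← tmul_sum, sum_counit_smul]

end AntipodeInverse

section HomActions

variable {k H V W M : Type*} [Field k] [Ring H] [HopfAlgebra k H]
  [AddCommGroup M] [Module k M] [Module H M] [IsScalarTower k H M] [SMulCommClass k H M]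
  [AddCommGroup V] [Module k V] [Module H V] [IsScalarTower k H V] [SMulCommClass k H V]
  [AddCommGroup W] [Module k W] [Module H W] [IsScalarTower k H W] [SMulCommClass k H W]

lemma leftHomAct_apply (S : H →ₗ[k] H) {h : H} {ι : Type*} (r : Repr k h ι) (φ : V →ₗ[k] M)
    (v : V) : leftHomAct S h φ v = ∑ i ∈ r.index, r.left i • φ (S (r.right i) • v) := by
  simp [leftHomAct, ← r.eq, map_sum]

lemma rightHomAct_apply (Sinv : H →ₗ[k] H) {h : H} {ι : Type*} (r : Repr k h ι)
    (φ : V →ₗ[k] M) (v : V) :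
    rightHomAct Sinv h φ v = ∑ i ∈ r.index, r.right i • φ (Sinv (r.left i) • v) := by
  simp [rightHomAct, ← r.eq, map_sum]

lemma leftHomAct_comp (S : H →ₗ[k] H) (h : H) (φ : V →ₗ[k] M) (g : W →ₗ[k] V)
    (hg : ∀ (a : H) (w : W), g (a • w) = a • g w) :
    leftHomAct S h φ ∘ₗ g = leftHomAct S h (φ ∘ₗ g) := by
  ext w
  simp [leftHomAct_apply S (ℛ k h), hg]

noncomputable def leftHomActₗ (S : H →ₗ[k] H) (φ : V →ₗ[k] M) : H →ₗ[k] V →ₗ[k] M where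
  toFun h := leftHomAct S h φ
  map_add' a b := by simp only [leftHomAct, map_add]
  map_smul' c a := by simp only [leftHomAct, map_smul, RingHom.id_apply]

end HomActions

section

variable {k H V : Type*} [Field k] [Ring H] [HopfAlgebra k H]
  [AddCommGroup V] [Module k V] [Module H V] [IsScalarTower k H V]

lemma smulPoint_hsmul (s : H) (v : V) :
    smulPoint (k := k) (s • v) = smulPoint v ∘ₗ LinearMap.mulRight k s := by
  ext h
  simp [mul_smul]

end

section AntiYetterDrinfeld

variable {k H M : Type*} [Field k] [Ring H] [HopfAlgebra k H]
  [AddCommGroup M] [Module k M] [Module H M] [IsScalarTower k H M] [SMulCommClass k H M]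

/-- The aYD condition `h • μ f = μ (h⁽²⁾ • f (S(h⁽³⁾) · - · h⁽¹⁾))`, with the Sweedler sums taken
over representations of `Δh` and `Δh⁽²⁾` whose index types live in the universes `u` and `v`. -/
def IsAYDContraaction (μ : (H →ₗ[k] M) →ₗ[k] M) : Prop :=
  ∀ (h : H) (f : H →ₗ[k] M) (ι : Type u) (r : Repr k h ι) (κ : ι → Type v)
    (r2 : ∀ i : ι, Repr k (r.right i) (κ i)),
    h • μ f = μ (∑ i ∈ r.index, ∑ j ∈ (r2 i).index,
      ((r2 i).left j) • (f ∘ₗ LinearMap.mulRight k (r.left i) ∘ₗ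
        LinearMap.mulLeft k (antipode k ((r2 i).right j))))

noncomputable def aydTwist (f : H →ₗ[k] M) : H ⊗[k] H →ₗ[k] H →ₗ[k] M :=
  lift (((LinearMap.llcomp k H H M).flip ∘ₗ (LinearMap.mul k H).flip).compl₂
    (leftHomActₗ (antipode k) f))

@[simp] lemma aydTwist_tmul (f : H →ₗ[k] M) (s q : H) :
    aydTwist f (s ⊗ₜ q) = leftHomAct (antipode k) q f ∘ₗ LinearMap.mulRight k s := by
  ext y
  rfl

lemma aydTwist_comp_mulRight (f : H →ₗ[k] M) (s : H) :
    aydTwist (f ∘ₗ LinearMap.mulRight k s) = aydTwist f ∘ₗ (LinearMap.mulRight k s).rTensor H := by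
  refine TensorProduct.ext' fun b q => ?_
  rw [LinearMap.comp_apply, LinearMap.rTensor_tmul, aydTwist_tmul, aydTwist_tmul,
    ← leftHomAct_comp _ _ _ _ fun a w => mul_assoc a w s, LinearMap.comp_assoc,
    ← LinearMap.mulRight_mul, LinearMap.mulRight_apply]

theorem IsAYDContraaction.smul_eq {μ : (H →ₗ[k] M) →ₗ[k] M} (hμ : IsAYDContraaction.{u, v} μ)
    (h : H) (f : H →ₗ[k] M) : h • μ f = μ (aydTwist f (comul h)) := by
  let r : Repr k h (ULift.{u} _) := (ℛ k h).ulift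
  let r₂ (i) : Repr k (r.right i) (ULift.{v} _) := (ℛ k (r.right i)).ulift
  rw [hμ h f _ r _ r₂, ← r.eq, map_sum (aydTwist f)]
  congr 1
  refine Finset.sum_congr rfl fun i _ => ?_
  ext y
  rw [aydTwist_tmul, LinearMap.comp_apply, LinearMap.mulRight_apply,
    leftHomAct_apply _ (r₂ i)]
  simp [mul_assoc]

end AntiYetterDrinfeld

section

variable {k H V M : Type*} [Field k] [Ring H] [HopfAlgebra k H]
  [AddCommGroup M] [Module k M] [Module H M] [IsScalarTower k H M] [SMulCommClass k H M]
  [AddCommGroup V] [Module k V] [Module H V] [IsScalarTower k H V] [SMulCommClass k H V]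

/-- `τ` intertwines the left and right internal-hom `H`-actions. -/
theorem tau_is_H_module_map
    (Sinv : H →ₗ[k] H)
    (hSinv : ∀ x : H, Sinv (HopfAlgebra.antipode (R := k) x) = x ∧
      HopfAlgebra.antipode (R := k) (Sinv x) = x)
    (μ : (H →ₗ[k] M) →ₗ[k] M)
    -- the aYD condition  h • μ(f) = μ(x ↦ h⁽²⁾ • f (S(h⁽³⁾) * x * h⁽¹⁾))
    (hayd : ∀ (h : H) (f : H →ₗ[k] M) (ι : Type*) (r : Coalgebra.Repr k h ι)
        (κ : ι → Type*) (r2 : ∀ i : ι, Coalgebra.Repr k (r.right i) (κ i)),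
      h • μ f = μ (∑ i ∈ r.index, ∑ j ∈ (r2 i).index,
        ((r2 i).left j) • (f ∘ₗ LinearMap.mulRight k (r.left i) ∘ₗ
          LinearMap.mulLeft k (HopfAlgebra.antipode (R := k) ((r2 i).right j))))) :
    ∀ (x : H) (φ : V →ₗ[k] M),
      rightHomAct Sinv x (tauMap μ φ) =
        tauMap μ (leftHomAct (HopfAlgebra.antipode (R := k)) x φ) := by
  intro x φ
  obtain ⟨hleft, hright⟩ := forall_and.mp hSinv
  let r := ℛ k x
  ext v
  let ψ : H →ₗ[k] M := φ ∘ₗ smulPoint v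
  calc rightHomAct Sinv x (tauMap μ φ) v
      = ∑ i ∈ r.index, r.right i • μ (ψ ∘ₗ LinearMap.mulRight k (Sinv (r.left i))) := by
        simp only [rightHomAct_apply _ r, tauMap, LinearMap.coe_mk, AddHom.coe_mk,
          smulPoint_hsmul, LinearMap.comp_assoc, ψ]
    _ = μ (aydTwist ψ (∑ i ∈ r.index,
          (LinearMap.mulRight k (Sinv (r.left i))).rTensor H (comul (r.right i)))) := by
        simp only [IsAYDContraaction.smul_eq hayd, aydTwist_comp_mulRight, map_sum,
          LinearMap.comp_apply]
    _ = μ (leftHomAct (antipode k) x φ ∘ₗ smulPoint v) := by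
        rw [sum_rTensor_mulRight_antipodeInv_comul_eq_one_tmul hleft hright r, aydTwist_tmul,
          LinearMap.mulRight_one, LinearMap.comp_id,
          leftHomAct_comp _ _ _ _ fun a h => mul_smul a h v]
    _ = tauMap μ (leftHomAct (antipode k) x φ) v := rfl

end
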